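/- arXiv:0712.3112 — 2 statements merged into one kernel-verified Lean document; each statement's English description precedes it below -/
import Mathlib

section
/- The edge elimination polynomial ξ is the unique isomorphism-invariant function f from finite multigraphs to ℤ[x, y, z] such that: f(∅) = 1, f(E₁) = x, f(G₁ ⊕ G₂) = f(G₁)·f(G₂) for all finite multigraphs G₁, G₂, and f(G) = f(G_{−e}) + y·f(G_{/e}) + z·f(G_{†e}) for every finite multigraph G and every edge e of G. -/
/-- A finite multigraph: finite vertex and edge types, each edge assigned an
unordered pair of (not necessarily distinct) endpoints. -/
structure Multigraph where
  V : Type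
  E : Type
  [fintypeV : Fintype V]
  [decEqV : DecidableEq V]
  [fintypeE : Fintype E]
  [decEqE : DecidableEq E]
  ends : E → Sym2 V

namespace Multigraph

attribute [instance] fintypeV decEqV fintypeE decEqE

/-- The empty multigraph. -/
def emptyGraph : Multigraph where
  V := Empty
  E := Empty
  ends := fun e => e.elim

/-- The one-vertex multigraph `E₁` with no edges. -/
def singleVertex : Multigraph where
  V := Unit
  E := Empty
  ends := fun e => e.elim

/-- Disjoint union of multigraphs. -/
def disjUnion (G₁ G₂ : Multigraph) : Multigraph where
  V := G₁.V ⊕ G₂.V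
  E := G₁.E ⊕ G₂.E
  ends := Sum.elim (fun e => (G₁.ends e).map Sum.inl) (fun e => (G₂.ends e).map Sum.inr)

/-- Deletion of an edge. -/
def deleteEdge (G : Multigraph) (e : G.E) : Multigraph where
  V := G.V
  E := {e' : G.E // e' ≠ e}
  ends := fun e' => G.ends e'.val

/-- Contraction of an edge: its endpoints are identified
(replaced by a single new vertex) and the edge is removed. -/
def contractEdge (G : Multigraph) (e : G.E) : Multigraph where
  V := {v : G.V // v ∉ G.ends e} ⊕ Unit
  E := {e' : G.E // e' ≠ e}
  ends := fun e' => (G.ends e'.val).map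
    (fun v => if h : v ∈ G.ends e then Sum.inr () else Sum.inl ⟨v, h⟩)

/-- Extraction of an edge: both endpoints are deleted together with
all incident edges. -/
def extractEdge (G : Multigraph) (e : G.E) : Multigraph where
  V := {v : G.V // v ∉ G.ends e}
  E := {e' : G.E // ∀ v : G.V, v ∈ G.ends e' → v ∉ G.ends e}
  ends := fun e' => (G.ends e'.val).attachWith (fun v hv => e'.prop v hv)

/-- Deletion of a vertex (together with all incident edges). -/
def deleteVertex (G : Multigraph) (v : G.V) : Multigraph where
  V := {w : G.V // w ≠ v}
  E := {e : G.E // v ∉ G.ends e}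
  ends := fun e => (G.ends e.val).attachWith
    (fun w hw => fun hwv => e.prop (hwv ▸ hw))

/-- Number of connected components of the spanning subgraph `(V, S)`. -/
noncomputable def k (G : Multigraph) (S : Finset G.E) : ℕ :=
  Nat.card (Quot (fun u v : G.V => ∃ e ∈ S, G.ends e = s(u, v)))

/-- Number of connected components of `(V(S), S)`, the graph on the vertices
covered by `S`. -/
noncomputable def kcov (G : Multigraph) (S : Finset G.E) : ℕ :=
  Nat.card (Quot (fun u v : {w : G.V // ∃ e ∈ S, w ∈ G.ends e} =>
    ∃ e ∈ S, G.ends e = s(u.val, v.val)))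

/-- `V(A)` and `V(B)` are disjoint. -/
def CovDisjoint (G : Multigraph) (A B : Finset G.E) : Prop :=
  ∀ v : G.V, (∃ e ∈ A, v ∈ G.ends e) → ¬ (∃ e ∈ B, v ∈ G.ends e)

instance (G : Multigraph) (A B : Finset G.E) : Decidable (G.CovDisjoint A B) := by
  unfold CovDisjoint; infer_instance

/-- The edge elimination polynomial (evaluated at `x y z` in a commutative ring):
`ξ(G,x,y,z) = Σ_{(A ⊔ B) ⊆ E} x^{k(A∪B)-k_cov(B)} y^{|A|+|B|-k_cov(B)} z^{k_cov(B)}`. -/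
noncomputable def xi {R : Type*} [CommRing R] (G : Multigraph) (x y z : R) : R :=
  ∑ A : Finset G.E, ∑ B : Finset G.E,
    if G.CovDisjoint A B then
      x ^ (G.k (A ∪ B) - G.kcov B) * y ^ (A.card + B.card - G.kcov B) * z ^ G.kcov B
    else 0

/-- Isomorphism of multigraphs. -/
structure Iso (G H : Multigraph) where
  vEquiv : G.V ≃ H.V
  eEquiv : G.E ≃ H.E
  ends_map : ∀ e : G.E, H.ends (eEquiv e) = (G.ends e).map vEquiv

end Multigraph

/-- An isomorphism-invariant function on finite multigraphs. -/
def Multigraph.Invariant {R : Type*} (f : Multigraph → R) : Prop :=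
  ∀ G H : Multigraph, Nonempty (G.Iso H) → f G = f H

/-!
Summands of `ξ(G)` are indexed by pairs `(A, B)` of edge sets with disjoint supports; fix an edge
`e`. The pairs avoiding `e` are the pairs of `G − e`. Each pair `(A, B)` of `G / e` is matched with
one pair of `G` containing `e`: `e` goes into `A` if `B` avoids the endpoints of `e`, and into `B`
otherwise. This keeps every component count and adds one edge, whence the factor `y`. The other
placement of `e` gives a zero summand unless `A` and `B` both avoid the endpoints of `e`; then
`(A, B + e)` is a pair of `G † e` together with the extra component `{e}` of `B + e`, whence the
factor `z`.

Uniqueness is by induction on the number of edges: the recurrence reduces every graph to edgeless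
ones, on which invariance and multiplicativity force the value `x ^ |V|`.
-/

section FinsetSums

variable {α M : Type*} [Fintype α] [AddCommMonoid M]

theorem Fintype.sum_finset_eq_sum_add_insert [DecidableEq α] (a : α) (f : Finset α → M) :
    ∑ s, f s = ∑ s ∈ (Finset.univ.filter (· ≠ a)).powerset, (f s + f (insert a s)) := by
  have huniv : (Finset.univ : Finset α) = insert a (Finset.univ.filter (· ≠ a)) := by
    ext b
    simp [em]
  conv_lhs => rw [← Finset.powerset_univ, huniv]
  rw [Finset.sum_powerset_insert (by simp), Finset.sum_add_distrib]

theorem Finset.sum_powerset_filter_subtype (p : α → Prop) [DecidablePred p]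
    (g : Finset (Subtype p) → M) :
    ∑ s ∈ (univ.filter p).powerset, g (s.subtype p) = ∑ t, g t := by
  refine Finset.sum_nbij' (fun s => s.subtype p) (fun t => t.map (Function.Embedding.subtype p))
    (fun _ _ => mem_univ _) (fun t _ => ?_) (fun s hs => ?_) (fun t _ => ?_) (fun _ _ => rfl)
  · simp only [mem_powerset, subset_iff, mem_map, Function.Embedding.coe_subtype, mem_filter,
      mem_univ, true_and]
    rintro _ ⟨b, -, rfl⟩
    exact b.2
  · exact Finset.subtype_map_of_mem fun a ha =>
      (Finset.mem_filter.1 (Finset.mem_powerset.1 hs ha)).2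
  · ext ⟨a, ha⟩
    simp [ha]

theorem Finset.sum_sum_powerset_filter_subtype (p : α → Prop) [DecidablePred p]
    (g : Finset (Subtype p) → Finset (Subtype p) → M) :
    ∑ s ∈ (univ.filter p).powerset, ∑ t ∈ (univ.filter p).powerset, g (s.subtype p) (t.subtype p) =
      ∑ s', ∑ t', g s' t' := by
  simp only [Finset.sum_powerset_filter_subtype p (g _)]
  exact Finset.sum_powerset_filter_subtype p fun s => ∑ t, g s t

theorem Finset.sum_powerset_filter_ite_forall {p q : α → Prop} [DecidablePred p] [DecidablePred q]
    [∀ s : Finset α, Decidable (∀ a ∈ s, q a)] (hqp : ∀ a, q a → p a) (g : Finset α → M) :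
    ∑ s ∈ (univ.filter p).powerset, (if ∀ a ∈ s, q a then g s else 0) =
      ∑ s ∈ (univ.filter q).powerset, g s := by
  rw [← Finset.sum_filter]
  congr 1
  ext s
  simp only [Finset.mem_filter, Finset.mem_powerset, Finset.subset_iff, Finset.mem_univ, true_and]
  exact ⟨fun h => h.2, fun h => ⟨fun a ha => hqp a (h a ha), h⟩⟩

theorem Finset.sum_sum_powerset_filter_ite_forall {p q : α → Prop} [DecidablePred p]
    [DecidablePred q] [∀ s : Finset α, Decidable (∀ a ∈ s, q a)] (hqp : ∀ a, q a → p a)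
    (g : Finset α → Finset α → M) :
    ∑ s ∈ (univ.filter p).powerset, ∑ t ∈ (univ.filter p).powerset,
        (if (∀ a ∈ s, q a) ∧ ∀ a ∈ t, q a then g s t else 0) =
      ∑ s ∈ (univ.filter q).powerset, ∑ t ∈ (univ.filter q).powerset, g s t := by
  simp only [ite_and, Finset.sum_ite_irrel, Finset.sum_const_zero,
    Finset.sum_powerset_filter_ite_forall hqp]

end FinsetSums
section QuotCard

variable {α β : Type*} {r : α → α → Prop} {s : β → β → Prop}

theorem Nat.card_quot_eq_of_surjective (f : α → β) (hf : Function.Surjective f)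
    (hr : ∀ a b, r a b → Quot.mk s (f a) = Quot.mk s (f b))
    (hfib : ∀ a b, f a = f b → Quot.mk r a = Quot.mk r b)
    (hs : ∀ a b, s (f a) (f b) → Quot.mk r a = Quot.mk r b) :
    Nat.card (Quot r) = Nat.card (Quot s) :=
  Nat.card_congr
    { toFun := Quot.lift (fun a => Quot.mk s (f a)) hr
      invFun := Quot.lift (fun b => Quot.mk r (Function.surjInv hf b)) fun b b' h =>
        hs _ _ (by rwa [Function.surjInv_eq hf, Function.surjInv_eq hf])
      left_inv := by rintro ⟨a⟩; exact hfib _ _ (Function.surjInv_eq hf _)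
      right_inv := by rintro ⟨b⟩; exact congrArg _ (Function.surjInv_eq hf b) }

def Quot.sumLiftRelEquiv (r : α → α → Prop) (s : β → β → Prop) :
    Quot (Sum.LiftRel r s) ≃ Quot r ⊕ Quot s where
  toFun := Quot.lift (Sum.map (Quot.mk r) (Quot.mk s)) fun
    | _, _, .inl h => congrArg Sum.inl (Quot.sound h)
    | _, _, .inr h => congrArg Sum.inr (Quot.sound h)
  invFun := Sum.elim (Quot.lift (Quot.mk _ ∘ Sum.inl) fun _ _ h => Quot.sound (.inl h))
    (Quot.lift (Quot.mk _ ∘ Sum.inr) fun _ _ h => Quot.sound (.inr h))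
  left_inv := by rintro ⟨a | b⟩ <;> rfl
  right_inv := by
    rintro (a | b) <;> [induction a using Quot.ind; induction b using Quot.ind] <;> rfl

theorem Nat.card_quot_sumLiftRel [Finite α] [Finite β] :
    Nat.card (Quot (Sum.LiftRel r s)) = Nat.card (Quot r) + Nat.card (Quot s) := by
  rw [Nat.card_congr (Quot.sumLiftRelEquiv r s), Nat.card_sum]

theorem Nat.card_quot_bot (α : Type*) : Nat.card (Quot (fun _ _ : α => False)) = Nat.card α :=
  Nat.card_congr
    { toFun := Quot.lift id fun _ _ h => h.elim
      invFun := Quot.mk _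
      left_inv := by rintro ⟨a⟩; rfl
      right_inv := fun _ => rfl }

theorem Nat.card_quot_subtype_le [Finite (Quot r)] {p : α → Prop} {s : Subtype p → Subtype p → Prop}
    (hs : ∀ a b, s a b → r a b)
    (hr : ∀ a b, r a b → p a ∨ p b → ∃ (ha : p a) (hb : p b), s ⟨a, ha⟩ ⟨b, hb⟩) :
    Nat.card (Quot s) ≤ Nat.card (Quot r) := by
  have key : ∀ a b, Relation.EqvGen r a b →
      (p a ↔ p b) ∧ ∀ ha hb, Quot.mk s ⟨a, ha⟩ = Quot.mk s ⟨b, hb⟩ := by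
    intro a b hab
    induction hab with
    | rel a b h =>
      refine ⟨⟨fun ha => (hr a b h (.inl ha)).2.1, fun hb => (hr a b h (.inr hb)).1⟩,
        fun ha _ => ?_⟩
      obtain ⟨_, _, h⟩ := hr a b h (.inl ha)
      exact Quot.sound h
    | refl => exact ⟨Iff.rfl, fun _ _ => rfl⟩
    | symm _ _ _ ih => exact ⟨ih.1.symm, fun ha hb => (ih.2 hb ha).symm⟩
    | trans _ _ _ _ _ ih₁ ih₂ =>
      exact ⟨ih₁.1.trans ih₂.1, fun ha hc => (ih₁.2 ha (ih₁.1.1 ha)).trans (ih₂.2 _ hc)⟩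
  refine Nat.card_le_card_of_injective
    (Quot.lift (fun a => Quot.mk r a.val) fun a b h => Quot.sound (hs a b h)) ?_
  rintro ⟨a, ha⟩ ⟨b, hb⟩ h
  exact (key a b (Quot.eq.1 h)).2 ha hb

end QuotCard

namespace Multigraph

variable {R : Type*} [CommRing R] (x y z : R) {G : Multigraph}

def spanRel (G : Multigraph) (S : Finset G.E) (a b : G.V) : Prop := ∃ e ∈ S, G.ends e = s(a, b)

def Covers (G : Multigraph) (S : Finset G.E) (w : G.V) : Prop := ∃ e ∈ S, w ∈ G.ends e

def covRel (G : Multigraph) (S : Finset G.E) (a b : {w // G.Covers S w}) : Prop :=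
  G.spanRel S a b

noncomputable def xiTerm (G : Multigraph) (A B : Finset G.E) : R :=
  if G.CovDisjoint A B then
    x ^ (G.k (A ∪ B) - G.kcov B) * y ^ (A.card + B.card - G.kcov B) * z ^ G.kcov B
  else 0

theorem k_eq_card_quot (S : Finset G.E) : G.k S = Nat.card (Quot (G.spanRel S)) := rfl

theorem kcov_eq_card_quot (S : Finset G.E) : G.kcov S = Nat.card (Quot (G.covRel S)) := rfl

theorem xi_eq_sum_xiTerm : G.xi x y z = ∑ A, ∑ B, G.xiTerm x y z A B := rfl

theorem covDisjoint_iff {A B : Finset G.E} :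
    G.CovDisjoint A B ↔ ∀ w, G.Covers A w → ¬ G.Covers B w := Iff.rfl

section Components

variable {S T : Finset G.E} {e : G.E} {a b : G.V}

theorem spanRel.symm (h : G.spanRel S a b) : G.spanRel S b a :=
  let ⟨e, he, hab⟩ := h
  ⟨e, he, hab.trans Sym2.eq_swap⟩

theorem spanRel.mono (hST : S ⊆ T) (h : G.spanRel S a b) : G.spanRel T a b :=
  let ⟨e, he, hab⟩ := h
  ⟨e, hST he, hab⟩

theorem Covers.mono (hST : S ⊆ T) (h : G.Covers S a) : G.Covers T a :=
  let ⟨e, he, ha⟩ := h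
  ⟨e, hST he, ha⟩

theorem spanRel.covers_left (h : G.spanRel S a b) : G.Covers S a :=
  let ⟨e, he, hab⟩ := h
  ⟨e, he, hab ▸ Sym2.mem_mk_left a b⟩

theorem spanRel.covers_right (h : G.spanRel S a b) : G.Covers S b :=
  h.symm.covers_left

theorem covers_iff_exists_spanRel : G.Covers S a ↔ ∃ b, G.spanRel S a b := by
  simp only [Covers, spanRel, Sym2.mem_iff_exists]
  exact ⟨fun ⟨e, he, b, h⟩ => ⟨b, e, he, h⟩, fun ⟨b, e, he, h⟩ => ⟨e, he, b, h⟩⟩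

theorem eq_or_spanRel_of_mem_ends (he : e ∈ S) (ha : a ∈ G.ends e) (hb : b ∈ G.ends e) :
    a = b ∨ G.spanRel S a b := by
  by_cases hab : a = b
  · exact .inl hab
  · exact .inr ⟨e, he, (Sym2.mem_and_mem_iff hab).1 ⟨ha, hb⟩⟩

theorem mk_spanRel_eq_of_mem_ends (he : e ∈ S) (ha : a ∈ G.ends e) (hb : b ∈ G.ends e) :
    Quot.mk (G.spanRel S) a = Quot.mk (G.spanRel S) b := by
  rcases eq_or_spanRel_of_mem_ends he ha hb with rfl | h
  exacts [rfl, Quot.sound h]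

theorem mk_covRel_eq_of_mem_ends {a b : {w // G.Covers S w}} (he : e ∈ S)
    (ha : a.val ∈ G.ends e) (hb : b.val ∈ G.ends e) :
    Quot.mk (G.covRel S) a = Quot.mk (G.covRel S) b := by
  rcases eq_or_spanRel_of_mem_ends he ha hb with h | h
  exacts [congrArg _ (Subtype.ext h), Quot.sound h]

theorem kcov_le_card (S : Finset G.E) : G.kcov S ≤ S.card := by
  rw [kcov_eq_card_quot, ← Nat.card_eq_finsetCard]
  refine Nat.card_le_card_of_surjective
    (fun e : S => Quot.mk _ ⟨(G.ends e).out.1, e, e.2, Sym2.out_fst_mem _⟩) ?_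
  rintro ⟨⟨w, e, he, hw⟩⟩
  exact ⟨⟨e, he⟩, mk_covRel_eq_of_mem_ends he (Sym2.out_fst_mem _) hw⟩

theorem kcov_le_k_union {A B : Finset G.E} (h : G.CovDisjoint A B) :
    G.kcov B ≤ G.k (A ∪ B) := by
  refine Nat.card_quot_subtype_le (fun _ _ => spanRel.mono Finset.subset_union_right) ?_
  rintro a b ⟨e, he, hab⟩ hcov
  have heB : e ∈ B := by
    refine (Finset.mem_union.1 he).resolve_left fun heA => ?_
    rcases hcov with ha | hb
    · exact h a ⟨e, heA, hab ▸ Sym2.mem_mk_left a b⟩ ha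
    · exact h b ⟨e, heA, hab ▸ Sym2.mem_mk_right a b⟩ hb
  have hB : G.spanRel B a b := ⟨e, heB, hab⟩
  exact ⟨hB.covers_left, hB.covers_right, hB⟩

end Components

theorem k_empty (G : Multigraph) : G.k ∅ = Fintype.card G.V := by
  rw [k_eq_card_quot, ← Nat.card_eq_fintype_card, ← Nat.card_quot_bot G.V]
  exact Nat.card_congr (Quot.congrRight fun _ _ => by simp [spanRel])

theorem xiTerm_eq_mul_xiTerm {H : Multigraph} {A B : Finset G.E} {A' B' : Finset H.E} (i j : ℕ)
    (hcov : G.CovDisjoint A B ↔ H.CovDisjoint A' B') (hk : G.k (A ∪ B) = H.k (A' ∪ B') + i)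
    (hkcov : G.kcov B = H.kcov B' + i) (hcard : A.card + B.card = A'.card + B'.card + i + j) :
    G.xiTerm x y z A B = y ^ j * z ^ i * H.xiTerm x y z A' B' := by
  have := kcov_le_card B'
  simp only [xiTerm, hcov]
  split_ifs
  · rw [hk, hkcov, Nat.add_sub_add_right, hcard,
      show A'.card + B'.card + i + j - (H.kcov B' + i) = A'.card + B'.card - H.kcov B' + j by omega,
      pow_add, pow_add]
    ring
  · rw [mul_zero]

theorem xi_of_isEmpty (G : Multigraph) [IsEmpty G.E] : G.xi x y z = x ^ Fintype.card G.V := by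
  have hcov : G.kcov ∅ = 0 := by
    rw [kcov_eq_card_quot]
    have : IsEmpty {w // G.Covers ∅ w} := ⟨fun ⟨_, _, he, _⟩ => by simp at he⟩
    exact Nat.card_of_isEmpty
  have hdef : (default : Finset G.E) = ∅ := Subsingleton.elim _ _
  simp [xi_eq_sum_xiTerm, xiTerm, covDisjoint_iff, Covers, hdef, hcov, k_empty]

namespace Iso

variable {H : Multigraph} (φ : G.Iso H) {S : Finset G.E}

theorem spanRel_map_iff {a b : G.V} :
    H.spanRel (S.map φ.eEquiv.toEmbedding) (φ.vEquiv a) (φ.vEquiv b) ↔ G.spanRel S a b := by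
  simp only [spanRel, Finset.mem_map, Equiv.coe_toEmbedding, exists_exists_and_eq_and,
    φ.ends_map, ← Sym2.map_mk, (Sym2.map.injective φ.vEquiv.injective).eq_iff]

theorem covers_map_iff {w : G.V} :
    H.Covers (S.map φ.eEquiv.toEmbedding) (φ.vEquiv w) ↔ G.Covers S w := by
  simp only [Covers, Finset.mem_map, Equiv.coe_toEmbedding, exists_exists_and_eq_and,
    φ.ends_map, Sym2.mem_map, φ.vEquiv.injective.eq_iff, exists_eq_right]

theorem k_map (S : Finset G.E) : H.k (S.map φ.eEquiv.toEmbedding) = G.k S :=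
  Nat.card_congr (Quot.congr φ.vEquiv fun _ _ => φ.spanRel_map_iff.symm).symm

theorem kcov_map (S : Finset G.E) : H.kcov (S.map φ.eEquiv.toEmbedding) = G.kcov S :=
  Nat.card_congr (Quot.congr (φ.vEquiv.subtypeEquiv fun _ => φ.covers_map_iff.symm)
    fun _ _ => φ.spanRel_map_iff.symm).symm

theorem covDisjoint_map_iff {A B : Finset G.E} :
    H.CovDisjoint (A.map φ.eEquiv.toEmbedding) (B.map φ.eEquiv.toEmbedding) ↔
      G.CovDisjoint A B := by
  rw [covDisjoint_iff, covDisjoint_iff, ← φ.vEquiv.forall_congr_right]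
  simp only [φ.covers_map_iff]

theorem xiTerm_map (A B : Finset G.E) :
    H.xiTerm x y z (A.map φ.eEquiv.toEmbedding) (B.map φ.eEquiv.toEmbedding) =
      G.xiTerm x y z A B := by
  simp only [xiTerm, φ.covDisjoint_map_iff, ← Finset.map_union, φ.k_map, φ.kcov_map,
    Finset.card_map]

end Iso

theorem xi_congr_iso {H : Multigraph} (φ : G.Iso H) : G.xi x y z = H.xi x y z :=
  Fintype.sum_equiv (Equiv.finsetCongr φ.eEquiv) _ _ fun A =>
    Fintype.sum_equiv (Equiv.finsetCongr φ.eEquiv) _ _ fun B => (φ.xiTerm_map x y z A B).symm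

section DisjUnion

variable {G₁ G₂ : Multigraph} {S₁ A₁ B₁ : Finset G₁.E} {S₂ A₂ B₂ : Finset G₂.E}

theorem spanRel_disjUnion_iff {a b : G₁.V ⊕ G₂.V} :
    (G₁.disjUnion G₂).spanRel (S₁.disjSum S₂) a b ↔
      Sum.LiftRel (G₁.spanRel S₁) (G₂.spanRel S₂) a b := by
  constructor
  · rintro ⟨e | e, he, h⟩
    · induction hpq : G₁.ends e using Sym2.ind with | _ p q => ?_
      simp only [disjUnion, Sum.elim_inl, hpq, Sym2.map_mk, Sym2.eq_iff] at h
      replace he := Finset.inl_mem_disjSum.1 he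
      rcases h with ⟨rfl, rfl⟩ | ⟨rfl, rfl⟩
      exacts [.inl ⟨e, he, hpq⟩, .inl ⟨e, he, hpq.trans Sym2.eq_swap⟩]
    · induction hpq : G₂.ends e using Sym2.ind with | _ p q => ?_
      simp only [disjUnion, Sum.elim_inr, hpq, Sym2.map_mk, Sym2.eq_iff] at h
      replace he := Finset.inr_mem_disjSum.1 he
      rcases h with ⟨rfl, rfl⟩ | ⟨rfl, rfl⟩
      exacts [.inr ⟨e, he, hpq⟩, .inr ⟨e, he, hpq.trans Sym2.eq_swap⟩]
  · rintro (⟨⟨e, he, h⟩⟩ | ⟨⟨e, he, h⟩⟩)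
    · exact ⟨.inl e, Finset.inl_mem_disjSum.2 he, by simp [disjUnion, h]⟩
    · exact ⟨.inr e, Finset.inr_mem_disjSum.2 he, by simp [disjUnion, h]⟩

theorem covers_disjUnion_inl_iff {w : G₁.V} :
    (G₁.disjUnion G₂).Covers (S₁.disjSum S₂) (.inl w) ↔ G₁.Covers S₁ w := by
  rw [covers_iff_exists_spanRel (G := G₁)]
  refine covers_iff_exists_spanRel.trans ⟨fun ⟨b, h⟩ => ?_, fun ⟨b, h⟩ => ⟨.inl b, ?_⟩⟩
  · cases spanRel_disjUnion_iff.1 h with | inl hw => exact ⟨_, hw⟩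
  · exact spanRel_disjUnion_iff.2 (.inl h)

theorem covers_disjUnion_inr_iff {w : G₂.V} :
    (G₁.disjUnion G₂).Covers (S₁.disjSum S₂) (.inr w) ↔ G₂.Covers S₂ w := by
  rw [covers_iff_exists_spanRel (G := G₂)]
  refine covers_iff_exists_spanRel.trans ⟨fun ⟨b, h⟩ => ?_, fun ⟨b, h⟩ => ⟨.inr b, ?_⟩⟩
  · cases spanRel_disjUnion_iff.1 h with | inr hw => exact ⟨_, hw⟩
  · exact spanRel_disjUnion_iff.2 (.inr h)

theorem k_disjUnion : (G₁.disjUnion G₂).k (S₁.disjSum S₂) = G₁.k S₁ + G₂.k S₂ := by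
  refine (k_eq_card_quot _).trans ?_
  rw [k_eq_card_quot, k_eq_card_quot, ← Nat.card_quot_sumLiftRel]
  exact Nat.card_congr (Quot.congrRight fun _ _ => spanRel_disjUnion_iff)

theorem kcov_disjUnion : (G₁.disjUnion G₂).kcov (S₁.disjSum S₂) = G₁.kcov S₁ + G₂.kcov S₂ := by
  refine (kcov_eq_card_quot _).trans ?_
  rw [kcov_eq_card_quot, kcov_eq_card_quot, ← Nat.card_quot_sumLiftRel]
  refine Nat.card_congr (Quot.congr (Equiv.subtypeSum.trans (Equiv.sumCongr
    (Equiv.subtypeEquivRight fun _ => covers_disjUnion_inl_iff)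
    (Equiv.subtypeEquivRight fun _ => covers_disjUnion_inr_iff))) ?_)
  rintro ⟨a | a, ha⟩ ⟨b | b, hb⟩ <;> refine spanRel_disjUnion_iff.trans ?_
  · show _ ↔ Sum.LiftRel (G₁.covRel S₁) (G₂.covRel S₂) (.inl ⟨a, _⟩) (.inl ⟨b, _⟩)
    simp only [Sum.liftRel_inl_inl, covRel]
  · exact iff_of_false Sum.not_liftRel_inl_inr Sum.not_liftRel_inl_inr
  · exact iff_of_false Sum.not_liftRel_inr_inl Sum.not_liftRel_inr_inl
  · show _ ↔ Sum.LiftRel (G₁.covRel S₁) (G₂.covRel S₂) (.inr ⟨a, _⟩) (.inr ⟨b, _⟩)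
    simp only [Sum.liftRel_inr_inr, covRel]

theorem covDisjoint_disjUnion_iff :
    (G₁.disjUnion G₂).CovDisjoint (A₁.disjSum A₂) (B₁.disjSum B₂) ↔
      G₁.CovDisjoint A₁ B₁ ∧ G₂.CovDisjoint A₂ B₂ := by
  refine covDisjoint_iff.trans ?_
  show (∀ w : G₁.V ⊕ G₂.V, _) ↔ _
  simp only [Sum.forall, covers_disjUnion_inl_iff, covers_disjUnion_inr_iff, covDisjoint_iff]

theorem xiTerm_disjUnion :
    (G₁.disjUnion G₂).xiTerm x y z (A₁.disjSum A₂) (B₁.disjSum B₂) =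
      G₁.xiTerm x y z A₁ B₁ * G₂.xiTerm x y z A₂ B₂ := by
  unfold xiTerm
  by_cases h₁ : G₁.CovDisjoint A₁ B₁ <;> by_cases h₂ : G₂.CovDisjoint A₂ B₂ <;>
    simp only [covDisjoint_disjUnion_iff, h₁, h₂, and_self, and_false, false_and, if_true,
      if_false, zero_mul, mul_zero]
  have hunion : (A₁.disjSum A₂ ∪ B₁.disjSum B₂ : Finset (G₁.disjUnion G₂).E) =
      (A₁ ∪ B₁).disjSum (A₂ ∪ B₂) := by
    show A₁.disjSum A₂ ∪ B₁.disjSum B₂ = _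
    ext (e | e) <;> simp
  have := kcov_le_k_union h₁
  have := kcov_le_k_union h₂
  have := kcov_le_card B₁
  have := kcov_le_card B₂
  have hcard (S₁ : Finset G₁.E) (S₂ : Finset G₂.E) :
      Finset.card (α := (G₁.disjUnion G₂).E) (S₁.disjSum S₂) = S₁.card + S₂.card :=
    Finset.card_disjSum S₁ S₂
  rw [hunion, k_disjUnion, kcov_disjUnion, hcard, hcard,
    show G₁.k (A₁ ∪ B₁) + G₂.k (A₂ ∪ B₂) - (G₁.kcov B₁ + G₂.kcov B₂) =
      (G₁.k (A₁ ∪ B₁) - G₁.kcov B₁) + (G₂.k (A₂ ∪ B₂) - G₂.kcov B₂) by omega,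
    show A₁.card + A₂.card + (B₁.card + B₂.card) - (G₁.kcov B₁ + G₂.kcov B₂) =
      (A₁.card + B₁.card - G₁.kcov B₁) + (A₂.card + B₂.card - G₂.kcov B₂) by omega]
  ring

theorem xi_disjUnion (G₁ G₂ : Multigraph) :
    (G₁.disjUnion G₂).xi x y z = G₁.xi x y z * G₂.xi x y z := by
  let e : Finset G₁.E × Finset G₂.E ≃ Finset (G₁.disjUnion G₂).E :=
    Finset.sumEquiv.symm.toEquiv
  calc (G₁.disjUnion G₂).xi x y z
      = ∑ A, ∑ B, (G₁.disjUnion G₂).xiTerm x y z (e A) (e B) := by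
        rw [xi_eq_sum_xiTerm]
        exact (Fintype.sum_equiv e _ _ fun A =>
          Fintype.sum_equiv e _ _ fun B => rfl).symm
    _ = ∑ A : Finset G₁.E × Finset G₂.E, ∑ B : Finset G₁.E × Finset G₂.E,
          G₁.xiTerm x y z A.1 B.1 * G₂.xiTerm x y z A.2 B.2 := by
        exact Finset.sum_congr rfl fun A _ => Finset.sum_congr rfl fun B _ => xiTerm_disjUnion x y z
    _ = G₁.xi x y z * G₂.xi x y z := by
        simp only [xi_eq_sum_xiTerm, Fintype.sum_prod_type, Finset.sum_mul_sum]

end DisjUnion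

abbrev EndsDisjoint (G : Multigraph) (f g : G.E) : Prop := ∀ v ∈ G.ends f, v ∉ G.ends g

theorem EndsDisjoint.symm {f g : G.E} (h : G.EndsDisjoint f g) : G.EndsDisjoint g f :=
  fun _ hg hf => h _ hf hg

theorem EndsDisjoint.ne {f g : G.E} (h : G.EndsDisjoint f g) : f ≠ g := by
  rintro rfl
  exact h _ (Sym2.out_fst_mem _) (Sym2.out_fst_mem _)

theorem covDisjoint_iff_endsDisjoint {A B : Finset G.E} :
    G.CovDisjoint A B ↔ ∀ f ∈ A, ∀ g ∈ B, G.EndsDisjoint f g := by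
  simp only [CovDisjoint, EndsDisjoint]
  exact ⟨fun h f hf g hg v hvf hvg => h v ⟨f, hf, hvf⟩ ⟨g, hg, hvg⟩,
    fun h v ⟨f, hf, hvf⟩ ⟨g, hg, hvg⟩ => h f hf g hg v hvf hvg⟩

section Deletion

variable {e : G.E} {A B S : Finset G.E}

-- `S.subtype (· ≠ e)`, typed as an edge set of `G − e` (and below of `G / e` and `G † e`) so that
-- lemmas about an arbitrary multigraph apply to it.
def deleteEdgeSet (G : Multigraph) (e : G.E) (S : Finset G.E) : Finset (G.deleteEdge e).E :=
  S.subtype (· ≠ e)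

theorem mem_deleteEdgeSet {f : G.E} {hf : f ≠ e} :
    (⟨f, hf⟩ : (G.deleteEdge e).E) ∈ G.deleteEdgeSet e S ↔ f ∈ S :=
  Finset.mem_subtype

theorem deleteEdgeSet_union :
    G.deleteEdgeSet e (A ∪ B) = G.deleteEdgeSet e A ∪ G.deleteEdgeSet e B := by
  show (A ∪ B).subtype (· ≠ e) = A.subtype (· ≠ e) ∪ B.subtype (· ≠ e)
  ext
  simp

theorem card_deleteEdgeSet (hS : e ∉ S) : (G.deleteEdgeSet e S).card = S.card := by
  show (S.subtype (· ≠ e)).card = S.card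
  rw [Finset.card_subtype, Finset.filter_true_of_mem fun f hf => ne_of_mem_of_not_mem hf hS]

theorem spanRel_deleteEdge_iff (hS : e ∉ S) {a b : (G.deleteEdge e).V} :
    (G.deleteEdge e).spanRel (G.deleteEdgeSet e S) a b ↔ G.spanRel S a b :=
  ⟨fun ⟨⟨f, _⟩, hf, h⟩ => ⟨f, mem_deleteEdgeSet.1 hf, h⟩,
    fun ⟨f, hf, h⟩ => ⟨⟨f, ne_of_mem_of_not_mem hf hS⟩, mem_deleteEdgeSet.2 hf, h⟩⟩

theorem covers_deleteEdge_iff (hS : e ∉ S) {w : (G.deleteEdge e).V} :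
    (G.deleteEdge e).Covers (G.deleteEdgeSet e S) w ↔ G.Covers S w :=
  ⟨fun ⟨⟨f, _⟩, hf, h⟩ => ⟨f, mem_deleteEdgeSet.1 hf, h⟩,
    fun ⟨f, hf, h⟩ => ⟨⟨f, ne_of_mem_of_not_mem hf hS⟩, mem_deleteEdgeSet.2 hf, h⟩⟩

theorem k_deleteEdge (hS : e ∉ S) : (G.deleteEdge e).k (G.deleteEdgeSet e S) = G.k S :=
  Nat.card_congr (Quot.congrRight fun _ _ => spanRel_deleteEdge_iff hS)

theorem kcov_deleteEdge (hS : e ∉ S) : (G.deleteEdge e).kcov (G.deleteEdgeSet e S) = G.kcov S :=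
  Nat.card_congr (Quot.congr (Equiv.subtypeEquivRight fun _ => covers_deleteEdge_iff hS)
    fun _ _ => spanRel_deleteEdge_iff hS)

theorem xiTerm_deleteEdge (hA : e ∉ A) (hB : e ∉ B) :
    (G.deleteEdge e).xiTerm x y z (G.deleteEdgeSet e A) (G.deleteEdgeSet e B) =
      G.xiTerm x y z A B := by
  have hcov : (G.deleteEdge e).CovDisjoint (G.deleteEdgeSet e A) (G.deleteEdgeSet e B) ↔
      G.CovDisjoint A B := by
    simp only [covDisjoint_iff, covers_deleteEdge_iff hA, covers_deleteEdge_iff hB]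
    rfl
  simp only [xiTerm, hcov, ← deleteEdgeSet_union, k_deleteEdge (Finset.notMem_union.2 ⟨hA, hB⟩),
    kcov_deleteEdge hB, card_deleteEdgeSet hA, card_deleteEdgeSet hB]

end Deletion

section Contraction

variable {e : G.E} {A B S T : Finset G.E} {a b v w : G.V}

def contractEdgeSet (G : Multigraph) (e : G.E) (S : Finset G.E) : Finset (G.contractEdge e).E :=
  S.subtype (· ≠ e)

theorem mem_contractEdgeSet {f : G.E} {hf : f ≠ e} :
    (⟨f, hf⟩ : (G.contractEdge e).E) ∈ G.contractEdgeSet e S ↔ f ∈ S :=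
  Finset.mem_subtype

theorem forall_mem_contractEdgeSet {P : (G.contractEdge e).E → Prop} :
    (∀ f ∈ G.contractEdgeSet e S, P f) ↔ ∀ f (hf : f ≠ e), f ∈ S → P ⟨f, hf⟩ :=
  ⟨fun h _ _ hfS => h _ (mem_contractEdgeSet.2 hfS), fun h ⟨f, hf⟩ hfS =>
    h f hf (mem_contractEdgeSet.1 hfS)⟩

theorem contractEdgeSet_union :
    G.contractEdgeSet e (A ∪ B) = G.contractEdgeSet e A ∪ G.contractEdgeSet e B := by
  show (A ∪ B).subtype (· ≠ e) = A.subtype (· ≠ e) ∪ B.subtype (· ≠ e)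
  ext
  simp

theorem contractEdgeSet_insert_self : G.contractEdgeSet e (insert e S) = G.contractEdgeSet e S := by
  show (insert e S).subtype (· ≠ e) = S.subtype (· ≠ e)
  ext ⟨f, hf⟩
  simp [hf]

theorem card_contractEdgeSet (hS : e ∉ S) : (G.contractEdgeSet e S).card = S.card := by
  show (S.subtype (· ≠ e)).card = S.card
  rw [Finset.card_subtype, Finset.filter_true_of_mem fun f hf => ne_of_mem_of_not_mem hf hS]

def contractMap (G : Multigraph) (e : G.E) (v : G.V) : (G.contractEdge e).V :=
  if h : v ∈ G.ends e then .inr () else .inl ⟨v, h⟩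

theorem ends_contractEdge {f : G.E} {hf : f ≠ e} :
    (G.contractEdge e).ends ⟨f, hf⟩ = (G.ends f).map (G.contractMap e) := rfl

theorem contractMap_of_mem (h : v ∈ G.ends e) : G.contractMap e v = .inr () := dif_pos h

theorem contractMap_of_notMem (h : v ∉ G.ends e) : G.contractMap e v = .inl ⟨v, h⟩ := dif_neg h

theorem contractMap_eq_contractMap_iff :
    G.contractMap e a = G.contractMap e b ↔ a = b ∨ a ∈ G.ends e ∧ b ∈ G.ends e := by
  by_cases ha : a ∈ G.ends e <;> by_cases hb : b ∈ G.ends e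
  · rw [contractMap_of_mem ha, contractMap_of_mem hb]
    exact iff_of_true rfl (.inr ⟨ha, hb⟩)
  · rw [contractMap_of_mem ha, contractMap_of_notMem hb]
    exact iff_of_false Sum.inr_ne_inl (by rintro (rfl | ⟨-, h⟩) <;> contradiction)
  · rw [contractMap_of_notMem ha, contractMap_of_mem hb]
    exact iff_of_false Sum.inl_ne_inr (by rintro (rfl | ⟨h, -⟩) <;> contradiction)
  · rw [contractMap_of_notMem ha, contractMap_of_notMem hb]
    refine ⟨fun h => .inl (congrArg Subtype.val (Sum.inl_injective h)), ?_⟩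
    rintro (rfl | ⟨h, -⟩)
    exacts [rfl, absurd h ha]

theorem contractMap_surjective : Function.Surjective (G.contractMap e) := by
  rintro (⟨v, hv⟩ | ⟨⟩)
  exacts [⟨v, contractMap_of_notMem hv⟩, ⟨_, contractMap_of_mem (Sym2.out_fst_mem _)⟩]

theorem endsDisjoint_contractEdge_iff {f g : G.E} {hf : f ≠ e} {hg : g ≠ e} :
    (G.contractEdge e).EndsDisjoint ⟨f, hf⟩ ⟨g, hg⟩ ↔
      G.EndsDisjoint f g ∧ (G.EndsDisjoint f e ∨ G.EndsDisjoint g e) := by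
  simp only [EndsDisjoint, ends_contractEdge, Sym2.mem_map, forall_exists_index, and_imp,
    forall_apply_eq_imp_iff₂, not_exists, not_and, contractMap_eq_contractMap_iff]
  constructor
  · intro h
    refine ⟨fun v hv hvg => h v hv v hvg (.inl rfl), ?_⟩
    by_contra! hne
    obtain ⟨⟨v, hv, hve⟩, ⟨w, hw, hwe⟩⟩ := hne
    exact h v hv w hw (.inr ⟨hwe, hve⟩)
  · rintro ⟨h, hfe | hge⟩ v hv w hw (rfl | ⟨hwe, hve⟩)
    exacts [h _ hv hw, hfe v hv hve, h _ hv hw, hge w hw hwe]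

theorem covDisjoint_contractEdge_iff (hA : e ∉ A) (hB : e ∉ B) :
    (G.contractEdge e).CovDisjoint (G.contractEdgeSet e A) (G.contractEdgeSet e B) ↔
      ∀ f ∈ A, ∀ g ∈ B, G.EndsDisjoint f g ∧ (G.EndsDisjoint f e ∨ G.EndsDisjoint g e) := by
  simp only [covDisjoint_iff_endsDisjoint, forall_mem_contractEdgeSet,
    endsDisjoint_contractEdge_iff]
  exact ⟨fun h f hf g hg => h f (ne_of_mem_of_not_mem hf hA) hf g (ne_of_mem_of_not_mem hg hB) hg,
    fun h f _ hf g _ hg => h f hf g hg⟩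

theorem spanRel.contractEdge (h : G.spanRel T a b) :
    G.contractMap e a = G.contractMap e b ∨
      (G.contractEdge e).spanRel (G.contractEdgeSet e T) (G.contractMap e a)
        (G.contractMap e b) := by
  obtain ⟨f, hfT, hab⟩ := h
  by_cases hfe : f = e
  · subst hfe
    exact .inl (contractMap_eq_contractMap_iff.2
      (.inr ⟨hab ▸ Sym2.mem_mk_left a b, hab ▸ Sym2.mem_mk_right a b⟩))
  · exact .inr ⟨⟨f, hfe⟩, mem_contractEdgeSet.2 hfT, by rw [ends_contractEdge, hab, Sym2.map_mk]⟩

theorem exists_spanRel_of_spanRel_contractEdge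
    (h : (G.contractEdge e).spanRel (G.contractEdgeSet e T) (G.contractMap e a)
      (G.contractMap e b)) :
    ∃ p q, G.contractMap e p = G.contractMap e a ∧ G.contractMap e q = G.contractMap e b ∧
      G.spanRel T p q := by
  obtain ⟨⟨f, hfe⟩, hfT, hab⟩ := h
  induction hpq : G.ends f using Sym2.ind with | _ p q => ?_
  rw [ends_contractEdge, hpq, Sym2.map_mk, Sym2.eq_iff] at hab
  have hf := mem_contractEdgeSet.1 hfT
  rcases hab with ⟨hp, hq⟩ | ⟨hq, hp⟩
  exacts [⟨p, q, hp, hq, f, hf, hpq⟩, ⟨q, p, hp, hq, f, hf, hpq.trans Sym2.eq_swap⟩]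

theorem mk_spanRel_eq_of_contractMap_eq (he : e ∈ T) (h : G.contractMap e a = G.contractMap e b) :
    Quot.mk (G.spanRel T) a = Quot.mk (G.spanRel T) b := by
  rcases contractMap_eq_contractMap_iff.1 h with rfl | ⟨ha, hb⟩
  exacts [rfl, mk_spanRel_eq_of_mem_ends he ha hb]

theorem k_contractEdge (he : e ∈ T) : (G.contractEdge e).k (G.contractEdgeSet e T) = G.k T := by
  refine (Nat.card_quot_eq_of_surjective (G.contractMap e) contractMap_surjective
    (fun a b h => ?_) (fun a b => mk_spanRel_eq_of_contractMap_eq he) (fun a b h => ?_)).symm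
  · rcases h.contractEdge (e := e) with h | h
    exacts [congrArg _ h, Quot.sound h]
  · obtain ⟨p, q, hp, hq, hpq⟩ := exists_spanRel_of_spanRel_contractEdge h
    exact (mk_spanRel_eq_of_contractMap_eq he hp.symm).trans
      ((Quot.sound hpq).trans (mk_spanRel_eq_of_contractMap_eq he hq))

theorem k_contractEdge_union :
    (G.contractEdge e).k (G.contractEdgeSet e A ∪ G.contractEdgeSet e B) =
      G.k (insert e (A ∪ B)) := by
  rw [← contractEdgeSet_union, ← contractEdgeSet_insert_self]
  exact k_contractEdge (Finset.mem_insert_self e _)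

theorem covers_contractEdge_iff {u : (G.contractEdge e).V} :
    (G.contractEdge e).Covers (G.contractEdgeSet e T) u ↔
      ∃ f ∈ T, f ≠ e ∧ ∃ v ∈ G.ends f, G.contractMap e v = u :=
  ⟨fun ⟨⟨f, hf⟩, hfT, hu⟩ => ⟨f, mem_contractEdgeSet.1 hfT, hf, Sym2.mem_map.1 hu⟩,
    fun ⟨f, hfT, hf, hu⟩ => ⟨⟨f, hf⟩, mem_contractEdgeSet.2 hfT, Sym2.mem_map.2 hu⟩⟩

theorem covers_contractEdge_iff_of_endsDisjoint (hT : ∀ f ∈ T, G.EndsDisjoint f e) :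
    (G.contractEdge e).Covers (G.contractEdgeSet e T) (G.contractMap e w) ↔ G.Covers T w := by
  rw [covers_contractEdge_iff]
  constructor
  · rintro ⟨f, hfT, -, v, hv, hvw⟩
    rcases contractMap_eq_contractMap_iff.1 hvw with rfl | ⟨hve, -⟩
    exacts [⟨f, hfT, hv⟩, absurd hve (hT f hfT v hv)]
  · rintro ⟨f, hfT, hw⟩
    exact ⟨f, hfT, (hT f hfT).ne, w, hw, rfl⟩

theorem covers_contractEdge_iff_insert (hT : e ∉ T) (htouch : ∃ g ∈ T, ¬ G.EndsDisjoint g e) :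
    (G.contractEdge e).Covers (G.contractEdgeSet e T) (G.contractMap e w) ↔
      G.Covers (insert e T) w := by
  rw [covers_contractEdge_iff]
  constructor
  · rintro ⟨f, hfT, -, v, hv, hvw⟩
    rcases contractMap_eq_contractMap_iff.1 hvw with rfl | ⟨-, hwe⟩
    exacts [⟨f, Finset.mem_insert_of_mem hfT, hv⟩, ⟨e, Finset.mem_insert_self e T, hwe⟩]
  · rintro ⟨f, hf, hw⟩
    rcases Finset.mem_insert.1 hf with rfl | hfT
    · obtain ⟨g, hgT, hg⟩ := htouch
      simp only [EndsDisjoint, not_forall, not_not] at hg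
      obtain ⟨v, hv, hve⟩ := hg
      exact ⟨g, hgT, ne_of_mem_of_not_mem hgT hT, v, hv,
        contractMap_eq_contractMap_iff.2 (.inr ⟨hve, hw⟩)⟩
    · exact ⟨f, hfT, ne_of_mem_of_not_mem hfT hT, w, hw, rfl⟩

-- `contractMap` is injective away from the endpoints of `e`; `hmem` makes this one fibre connected
-- through `e` whenever it is covered.
theorem kcov_contractEdge
    (hcov : ∀ w, (G.contractEdge e).Covers (G.contractEdgeSet e T) (G.contractMap e w) ↔
      G.Covers T w)
    (hmem : ∀ w, G.Covers T w → w ∈ G.ends e → e ∈ T) :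
    (G.contractEdge e).kcov (G.contractEdgeSet e T) = G.kcov T := by
  have hfib (a b : {w // G.Covers T w}) (h : G.contractMap e a = G.contractMap e b) :
      Quot.mk (G.covRel T) a = Quot.mk (G.covRel T) b := by
    rcases contractMap_eq_contractMap_iff.1 h with h | ⟨ha, hb⟩
    exacts [congrArg _ (Subtype.ext h), mk_covRel_eq_of_mem_ends (hmem a a.2 ha) ha hb]
  refine (Nat.card_quot_eq_of_surjective (fun w => ⟨G.contractMap e w, (hcov w).2 w.2⟩) ?_
    (fun a b h => ?_) (fun a b h => hfib a b (congrArg Subtype.val h)) (fun a b h => ?_)).symm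
  · rintro ⟨u, hu⟩
    obtain ⟨g, hgT, -, v, hv, rfl⟩ := covers_contractEdge_iff.1 hu
    exact ⟨⟨v, g, hgT, hv⟩, rfl⟩
  · rcases spanRel.contractEdge (e := e) (T := T) h with h | h
    exacts [congrArg _ (Subtype.ext h), Quot.sound h]
  · obtain ⟨p, q, hp, hq, hpq⟩ := exists_spanRel_of_spanRel_contractEdge h
    have hpq' : G.covRel T ⟨p, hpq.covers_left⟩ ⟨q, hpq.covers_right⟩ := hpq
    exact (hfib a _ hp.symm).trans ((Quot.sound hpq').trans (hfib _ b hq))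

theorem kcov_contractEdge_of_endsDisjoint (hT : ∀ f ∈ T, G.EndsDisjoint f e) :
    (G.contractEdge e).kcov (G.contractEdgeSet e T) = G.kcov T :=
  kcov_contractEdge (fun _ => covers_contractEdge_iff_of_endsDisjoint hT)
    fun w ⟨f, hfT, hw⟩ hwe => absurd hwe (hT f hfT w hw)

theorem kcov_contractEdge_insert (hT : e ∉ T) (htouch : ∃ g ∈ T, ¬ G.EndsDisjoint g e) :
    (G.contractEdge e).kcov (G.contractEdgeSet e T) = G.kcov (insert e T) := by
  rw [← contractEdgeSet_insert_self]
  refine kcov_contractEdge (fun _ => ?_) fun _ _ _ => Finset.mem_insert_self e T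
  rw [contractEdgeSet_insert_self]
  exact covers_contractEdge_iff_insert hT htouch

theorem xiTerm_insert_left_eq_contractEdge (hA : e ∉ A) (hB : ∀ g ∈ B, G.EndsDisjoint g e) :
    G.xiTerm x y z (insert e A) B =
      y * (G.contractEdge e).xiTerm x y z (G.contractEdgeSet e A) (G.contractEdgeSet e B) := by
  have hBe : e ∉ B := fun he => (hB e he).ne rfl
  have hcov : G.CovDisjoint (insert e A) B ↔
      (G.contractEdge e).CovDisjoint (G.contractEdgeSet e A) (G.contractEdgeSet e B) := by
    rw [covDisjoint_contractEdge_iff hA hBe, covDisjoint_iff_endsDisjoint, Finset.forall_mem_insert]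
    exact ⟨fun ⟨_, h⟩ f hf g hg => ⟨h f hf g hg, .inr (hB g hg)⟩,
      fun h => ⟨fun g hg => (hB g hg).symm, fun f hf g hg => (h f hf g hg).1⟩⟩
  simpa using xiTerm_eq_mul_xiTerm x y z 0 1 hcov
    (by rw [Finset.insert_union, k_contractEdge_union, add_zero])
    (kcov_contractEdge_of_endsDisjoint hB).symm
    (by rw [Finset.card_insert_of_notMem hA, card_contractEdgeSet hA, card_contractEdgeSet hBe]
        ring)

theorem xiTerm_insert_right_eq_contractEdge (hA : e ∉ A) (hB : e ∉ B)
    (htouch : ∃ g ∈ B, ¬ G.EndsDisjoint g e) :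
    G.xiTerm x y z A (insert e B) =
      y * (G.contractEdge e).xiTerm x y z (G.contractEdgeSet e A) (G.contractEdgeSet e B) := by
  have hcov : G.CovDisjoint A (insert e B) ↔
      (G.contractEdge e).CovDisjoint (G.contractEdgeSet e A) (G.contractEdgeSet e B) := by
    rw [covDisjoint_contractEdge_iff hA hB, covDisjoint_iff_endsDisjoint]
    simp only [Finset.forall_mem_insert]
    obtain ⟨g₀, hg₀, hne⟩ := htouch
    exact ⟨fun h f hf g hg => ⟨(h f hf).2 g hg, .inl (h f hf).1⟩,
      fun h f hf => ⟨(h f hf g₀ hg₀).2.resolve_right hne, fun g hg => (h f hf g hg).1⟩⟩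
  simpa using xiTerm_eq_mul_xiTerm x y z 0 1 hcov
    (by rw [Finset.union_insert, k_contractEdge_union, add_zero])
    (kcov_contractEdge_insert hB htouch).symm
    (by rw [Finset.card_insert_of_notMem hB, card_contractEdgeSet hA, card_contractEdgeSet hB]
        ring)

end Contraction

section Extraction

variable {e : G.E} {A B S : Finset G.E}

def extractEdgeSet (G : Multigraph) (e : G.E) (S : Finset G.E) : Finset (G.extractEdge e).E :=
  S.subtype (G.EndsDisjoint · e)

theorem mem_extractEdgeSet {f : G.E} {hf : G.EndsDisjoint f e} :
    (⟨f, hf⟩ : (G.extractEdge e).E) ∈ G.extractEdgeSet e S ↔ f ∈ S :=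
  Finset.mem_subtype

theorem forall_mem_extractEdgeSet {P : (G.extractEdge e).E → Prop} :
    (∀ f ∈ G.extractEdgeSet e S, P f) ↔ ∀ f (hf : G.EndsDisjoint f e), f ∈ S → P ⟨f, hf⟩ :=
  ⟨fun h _ _ hfS => h _ (mem_extractEdgeSet.2 hfS), fun h ⟨f, hf⟩ hfS =>
    h f hf (mem_extractEdgeSet.1 hfS)⟩

theorem extractEdgeSet_union :
    G.extractEdgeSet e (A ∪ B) = G.extractEdgeSet e A ∪ G.extractEdgeSet e B := by
  show (A ∪ B).subtype (G.EndsDisjoint · e) =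
    A.subtype (G.EndsDisjoint · e) ∪ B.subtype (G.EndsDisjoint · e)
  ext
  simp

theorem card_extractEdgeSet (hS : ∀ f ∈ S, G.EndsDisjoint f e) :
    (G.extractEdgeSet e S).card = S.card := by
  show (S.subtype (G.EndsDisjoint · e)).card = S.card
  rw [Finset.card_subtype, Finset.filter_true_of_mem hS]

theorem ends_extractEdge_map_val {f : G.E} {hf : G.EndsDisjoint f e} :
    ((G.extractEdge e).ends ⟨f, hf⟩).map Subtype.val = G.ends f :=
  Sym2.attachWith_map_subtypeVal _

theorem mem_ends_extractEdge_iff {f : G.E} {hf : G.EndsDisjoint f e} {u : (G.extractEdge e).V} :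
    u ∈ (G.extractEdge e).ends ⟨f, hf⟩ ↔ u.val ∈ G.ends f := by
  have h : ((G.extractEdge e).ends ⟨f, hf⟩).map Subtype.val = G.ends f := ends_extractEdge_map_val
  refine ⟨fun hu => h ▸ Sym2.mem_map.2 ⟨u, hu, rfl⟩, fun hu => ?_⟩
  obtain ⟨u', hu', hval⟩ := Sym2.mem_map.1 (h.symm ▸ hu)
  exact Subtype.ext hval ▸ hu'

theorem ends_extractEdge_eq_iff {f : G.E} {hf : G.EndsDisjoint f e} {u w : (G.extractEdge e).V} :
    (G.extractEdge e).ends ⟨f, hf⟩ = s(u, w) ↔ G.ends f = s(u.val, w.val) := by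
  have h : ((G.extractEdge e).ends ⟨f, hf⟩).map Subtype.val = G.ends f := ends_extractEdge_map_val
  refine (Sym2.map.injective Subtype.val_injective).eq_iff.symm.trans ?_
  exact h ▸ Iff.rfl

theorem spanRel_extractEdge_iff (hS : ∀ f ∈ S, G.EndsDisjoint f e) {u w : (G.extractEdge e).V} :
    (G.extractEdge e).spanRel (G.extractEdgeSet e S) u w ↔ G.spanRel S u.val w.val :=
  ⟨fun ⟨⟨f, _⟩, hfS, h⟩ => ⟨f, mem_extractEdgeSet.1 hfS, ends_extractEdge_eq_iff.1 h⟩,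
    fun ⟨f, hfS, h⟩ => ⟨⟨f, hS f hfS⟩, mem_extractEdgeSet.2 hfS, ends_extractEdge_eq_iff.2 h⟩⟩

theorem covers_extractEdge_iff (hS : ∀ f ∈ S, G.EndsDisjoint f e) {u : (G.extractEdge e).V} :
    (G.extractEdge e).Covers (G.extractEdgeSet e S) u ↔ G.Covers S u.val :=
  ⟨fun ⟨⟨f, _⟩, hfS, h⟩ => ⟨f, mem_extractEdgeSet.1 hfS, mem_ends_extractEdge_iff.1 h⟩,
    fun ⟨f, hfS, h⟩ => ⟨⟨f, hS f hfS⟩, mem_extractEdgeSet.2 hfS, mem_ends_extractEdge_iff.2 h⟩⟩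

theorem endsDisjoint_extractEdge_iff {f g : G.E} {hf : G.EndsDisjoint f e}
    {hg : G.EndsDisjoint g e} :
    (G.extractEdge e).EndsDisjoint ⟨f, hf⟩ ⟨g, hg⟩ ↔ G.EndsDisjoint f g := by
  refine ⟨fun h v hv hvg => h ⟨v, hf v hv⟩ (mem_ends_extractEdge_iff.2 hv)
    (mem_ends_extractEdge_iff.2 hvg), fun h u hu hug => ?_⟩
  exact h u.val (mem_ends_extractEdge_iff.1 hu) (mem_ends_extractEdge_iff.1 hug)

theorem covDisjoint_extractEdge_iff (hA : ∀ f ∈ A, G.EndsDisjoint f e)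
    (hB : ∀ g ∈ B, G.EndsDisjoint g e) :
    (G.extractEdge e).CovDisjoint (G.extractEdgeSet e A) (G.extractEdgeSet e B) ↔
      G.CovDisjoint A B := by
  simp only [covDisjoint_iff_endsDisjoint, forall_mem_extractEdgeSet,
    endsDisjoint_extractEdge_iff]
  exact ⟨fun h f hf g hg => h f (hA f hf) hf g (hB g hg) hg, fun h f _ hf g _ hg => h f hf g hg⟩

-- `(G.contractEdge e).V` is `(G.extractEdge e).V ⊕ Unit`, the contracted vertex being `inr ()`,
-- which is isolated when `S` avoids the endpoints of `e`.
theorem spanRel_contractEdge_iff_liftRel (hS : ∀ f ∈ S, G.EndsDisjoint f e)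
    {u w : (G.contractEdge e).V} :
    (G.contractEdge e).spanRel (G.contractEdgeSet e S) u w ↔
      Sum.LiftRel ((G.extractEdge e).spanRel (G.extractEdgeSet e S))
        (fun _ _ : Unit => False) u w := by
  constructor
  · rintro ⟨⟨f, hfe⟩, hfS, h⟩
    have hf := mem_contractEdgeSet.1 hfS
    induction hpq : G.ends f using Sym2.ind with | _ p q => ?_
    have hp : p ∉ G.ends e := hS f hf p (hpq ▸ Sym2.mem_mk_left p q)
    have hq : q ∉ G.ends e := hS f hf q (hpq ▸ Sym2.mem_mk_right p q)
    rw [ends_contractEdge, hpq, Sym2.map_mk, contractMap_of_notMem hp,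
      contractMap_of_notMem hq] at h
    have hspan : (G.extractEdge e).spanRel (G.extractEdgeSet e S) ⟨p, hp⟩ ⟨q, hq⟩ :=
      (spanRel_extractEdge_iff hS).2 ⟨f, hf, hpq⟩
    rcases Sym2.eq_iff.1 h with ⟨rfl, rfl⟩ | ⟨rfl, rfl⟩
    exacts [.inl hspan, .inl (spanRel.symm hspan)]
  · rintro (@⟨a, c, h⟩ | ⟨⟨⟩⟩)
    obtain ⟨f, hf, hac⟩ := (spanRel_extractEdge_iff hS).1 h
    refine ⟨⟨f, (hS f hf).ne⟩, mem_contractEdgeSet.2 hf, ?_⟩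
    rw [ends_contractEdge, hac, Sym2.map_mk, contractMap_of_notMem a.2, contractMap_of_notMem c.2]
    rfl

theorem k_insert_eq_extractEdge (hS : ∀ f ∈ S, G.EndsDisjoint f e) :
    G.k (insert e S) = (G.extractEdge e).k (G.extractEdgeSet e S) + 1 := by
  rw [← k_contractEdge (Finset.mem_insert_self e S), contractEdgeSet_insert_self,
    k_eq_card_quot, k_eq_card_quot, ← Nat.card_unique (α := Quot fun _ _ : Unit => False),
    ← Nat.card_quot_sumLiftRel]
  exact Nat.card_congr (Quot.congrRight fun _ _ => spanRel_contractEdge_iff_liftRel hS)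

theorem Covers.of_insert {w : G.V} (h : G.Covers (insert e S) w) (hw : w ∉ G.ends e) :
    G.Covers S w := by
  obtain ⟨f, hf, hwf⟩ := h
  rcases Finset.mem_insert.1 hf with rfl | hfS
  exacts [absurd hwf hw, ⟨f, hfS, hwf⟩]

theorem kcov_insert_eq_extractEdge (hS : ∀ f ∈ S, G.EndsDisjoint f e) :
    G.kcov (insert e S) = (G.extractEdge e).kcov (G.extractEdgeSet e S) + 1 := by
  let φ : {w // G.Covers (insert e S) w} →
      {u // (G.extractEdge e).Covers (G.extractEdgeSet e S) u} ⊕ Unit := fun w =>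
    if h : w.val ∈ G.ends e then .inr ()
    else .inl ⟨⟨w.val, h⟩, (covers_extractEdge_iff hS).2 (w.2.of_insert h)⟩
  rw [kcov_eq_card_quot, kcov_eq_card_quot, ← Nat.card_unique (α := Quot fun _ _ : Unit => False),
    ← Nat.card_quot_sumLiftRel]
  refine Nat.card_quot_eq_of_surjective φ ?_ ?_ ?_ ?_
  · rintro (⟨u, hu⟩ | ⟨⟩)
    · exact ⟨⟨u.val, ((covers_extractEdge_iff hS).1 hu).mono (Finset.subset_insert e S)⟩,
        by simp only [φ, dif_neg u.2]; rfl⟩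
    · exact ⟨⟨_, e, Finset.mem_insert_self e S, Sym2.out_fst_mem _⟩,
        by simp only [φ, dif_pos (Sym2.out_fst_mem _)]⟩
  · rintro a b ⟨g, hg, hab⟩
    rcases Finset.mem_insert.1 hg with rfl | hgS
    · simp only [φ, dif_pos (hab ▸ Sym2.mem_mk_left _ _ : a.val ∈ G.ends g),
        dif_pos (hab ▸ Sym2.mem_mk_right _ _ : b.val ∈ G.ends g)]
    · have ha : a.val ∉ G.ends e := hS g hgS _ (hab ▸ Sym2.mem_mk_left _ _)
      have hb : b.val ∉ G.ends e := hS g hgS _ (hab ▸ Sym2.mem_mk_right _ _)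
      simp only [φ, dif_neg ha, dif_neg hb]
      exact Quot.sound (.inl ((spanRel_extractEdge_iff hS).2 ⟨g, hgS, hab⟩))
  · intro a b h
    by_cases ha : a.val ∈ G.ends e <;> by_cases hb : b.val ∈ G.ends e <;>
      simp only [φ, ha, hb, dif_pos, dif_neg, not_false_eq_true, reduceCtorEq,
        Sum.inl.injEq] at h
    · exact mk_covRel_eq_of_mem_ends (Finset.mem_insert_self e S) ha hb
    · exact congrArg _ (Subtype.ext (congrArg (·.val.val) h))
  · intro a b h
    by_cases ha : a.val ∈ G.ends e <;> by_cases hb : b.val ∈ G.ends e <;>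
      simp only [φ, ha, hb, dif_pos, dif_neg, not_false_eq_true, Sum.liftRel_inr_inr,
        Sum.not_liftRel_inl_inr, Sum.not_liftRel_inr_inl, Sum.liftRel_inl_inl] at h
    exact Quot.sound (((spanRel_extractEdge_iff hS).1 h).mono (Finset.subset_insert e S))

theorem xiTerm_insert_right_eq_extractEdge (hA : ∀ f ∈ A, G.EndsDisjoint f e)
    (hB : ∀ g ∈ B, G.EndsDisjoint g e) :
    G.xiTerm x y z A (insert e B) =
      z * (G.extractEdge e).xiTerm x y z (G.extractEdgeSet e A) (G.extractEdgeSet e B) := by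
  have hBe : e ∉ B := fun he => (hB e he).ne rfl
  have hcov : G.CovDisjoint A (insert e B) ↔
      (G.extractEdge e).CovDisjoint (G.extractEdgeSet e A) (G.extractEdgeSet e B) := by
    rw [covDisjoint_extractEdge_iff hA hB, covDisjoint_iff_endsDisjoint,
      covDisjoint_iff_endsDisjoint]
    simp only [Finset.forall_mem_insert]
    exact ⟨fun h f hf => (h f hf).2, fun h f hf => ⟨hA f hf, h f hf⟩⟩
  have hAB : ∀ f ∈ A ∪ B, G.EndsDisjoint f e := by
    simpa only [Finset.forall_mem_union] using And.intro hA hB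
  simpa using xiTerm_eq_mul_xiTerm x y z 1 0 hcov
    (by rw [Finset.union_insert, k_insert_eq_extractEdge hAB, extractEdgeSet_union])
    (kcov_insert_eq_extractEdge hB)
    (by rw [Finset.card_insert_of_notMem hBe, card_extractEdgeSet hA, card_extractEdgeSet hB]; ring)

end Extraction

section Recurrence

variable {e : G.E} {A B : Finset G.E}

theorem xiTerm_eq_zero_of_not_covDisjoint (h : ¬ G.CovDisjoint A B) : G.xiTerm x y z A B = 0 :=
  if_neg h

theorem xiTerm_insert_left_eq_zero (hB : ∃ g ∈ B, ¬ G.EndsDisjoint g e) :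
    G.xiTerm x y z (insert e A) B = 0 := by
  refine xiTerm_eq_zero_of_not_covDisjoint x y z fun h => ?_
  obtain ⟨g, hg, hne⟩ := hB
  exact hne (covDisjoint_iff_endsDisjoint.1 h e (Finset.mem_insert_self e A) g hg).symm

theorem xiTerm_insert_right_eq_zero (hA : ∃ f ∈ A, ¬ G.EndsDisjoint f e) :
    G.xiTerm x y z A (insert e B) = 0 := by
  refine xiTerm_eq_zero_of_not_covDisjoint x y z fun h => ?_
  obtain ⟨f, hf, hne⟩ := hA
  exact hne (covDisjoint_iff_endsDisjoint.1 h f hf e (Finset.mem_insert_self e B))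

theorem xiTerm_insert_insert : G.xiTerm x y z (insert e A) (insert e B) = 0 := by
  refine xiTerm_eq_zero_of_not_covDisjoint x y z fun h => ?_
  exact (covDisjoint_iff_endsDisjoint.1 h e (Finset.mem_insert_self e A) e
    (Finset.mem_insert_self e B)).ne rfl

theorem xiTerm_insert_add (hA : e ∉ A) (hB : e ∉ B) :
    G.xiTerm x y z A (insert e B) + G.xiTerm x y z (insert e A) B +
        G.xiTerm x y z (insert e A) (insert e B) =
      y * (G.contractEdge e).xiTerm x y z (G.contractEdgeSet e A) (G.contractEdgeSet e B) +
        if (∀ f ∈ A, G.EndsDisjoint f e) ∧ ∀ g ∈ B, G.EndsDisjoint g e then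
          z * (G.extractEdge e).xiTerm x y z (G.extractEdgeSet e A) (G.extractEdgeSet e B)
        else 0 := by
  rw [xiTerm_insert_insert, add_zero]
  by_cases hBe : ∀ g ∈ B, G.EndsDisjoint g e
  · rw [xiTerm_insert_left_eq_contractEdge x y z hA hBe]
    by_cases hAe : ∀ f ∈ A, G.EndsDisjoint f e
    · rw [xiTerm_insert_right_eq_extractEdge x y z hAe hBe, if_pos ⟨hAe, hBe⟩, add_comm]
    · push Not at hAe
      rw [xiTerm_insert_right_eq_zero x y z hAe, if_neg fun h => ?_, zero_add, add_zero]
      obtain ⟨f, hf, hne⟩ := hAe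
      exact hne (h.1 f hf)
  · rw [if_neg fun h => hBe h.2, add_zero]
    push Not at hBe
    rw [xiTerm_insert_right_eq_contractEdge x y z hA hB hBe, xiTerm_insert_left_eq_zero x y z hBe,
      add_zero]

end Recurrence

theorem notMem_of_mem_powerset_filter_ne {e : G.E} {A : Finset G.E}
    (hA : A ∈ (Finset.univ.filter (· ≠ e)).powerset) : e ∉ A := fun he => by
  simpa using Finset.mem_powerset.1 hA he

theorem sum_xiTerm_eq_xi_deleteEdge (e : G.E) :
    ∑ A ∈ (Finset.univ.filter (· ≠ e)).powerset, ∑ B ∈ (Finset.univ.filter (· ≠ e)).powerset,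
      G.xiTerm x y z A B = (G.deleteEdge e).xi x y z := by
  rw [xi_eq_sum_xiTerm]
  refine (Finset.sum_congr rfl fun A hA => Finset.sum_congr rfl fun B hB =>
    (xiTerm_deleteEdge x y z (notMem_of_mem_powerset_filter_ne hA)
      (notMem_of_mem_powerset_filter_ne hB)).symm).trans ?_
  exact Finset.sum_sum_powerset_filter_subtype (· ≠ e) ((G.deleteEdge e).xiTerm x y z)

theorem sum_xiTerm_contractEdge_eq_xi (e : G.E) :
    ∑ A ∈ (Finset.univ.filter (· ≠ e)).powerset, ∑ B ∈ (Finset.univ.filter (· ≠ e)).powerset,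
      (G.contractEdge e).xiTerm x y z (G.contractEdgeSet e A) (G.contractEdgeSet e B) =
        (G.contractEdge e).xi x y z :=
  Finset.sum_sum_powerset_filter_subtype (· ≠ e) ((G.contractEdge e).xiTerm x y z)

theorem sum_xiTerm_extractEdge_eq_xi (e : G.E) :
    ∑ A ∈ (Finset.univ.filter (· ≠ e)).powerset, ∑ B ∈ (Finset.univ.filter (· ≠ e)).powerset,
      (if (∀ f ∈ A, G.EndsDisjoint f e) ∧ ∀ g ∈ B, G.EndsDisjoint g e then
        (G.extractEdge e).xiTerm x y z (G.extractEdgeSet e A) (G.extractEdgeSet e B) else 0) =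
        (G.extractEdge e).xi x y z := by
  rw [Finset.sum_sum_powerset_filter_ite_forall (p := (· ≠ e)) (q := (G.EndsDisjoint · e))
    fun f hf => EndsDisjoint.ne hf]
  exact Finset.sum_sum_powerset_filter_subtype (G.EndsDisjoint · e) ((G.extractEdge e).xiTerm x y z)

theorem xi_eq_deleteEdge_add (G : Multigraph) (e : G.E) :
    G.xi x y z = (G.deleteEdge e).xi x y z + y * (G.contractEdge e).xi x y z +
      z * (G.extractEdge e).xi x y z := by
  set P := (Finset.univ.filter (· ≠ e)).powerset
  calc G.xi x y z = ∑ A ∈ P, ∑ B ∈ P, (G.xiTerm x y z A B + (G.xiTerm x y z A (insert e B) +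
        G.xiTerm x y z (insert e A) B + G.xiTerm x y z (insert e A) (insert e B))) := by
        rw [xi_eq_sum_xiTerm, Fintype.sum_finset_eq_sum_add_insert e]
        refine Finset.sum_congr rfl fun A _ => ?_
        rw [Fintype.sum_finset_eq_sum_add_insert e, Fintype.sum_finset_eq_sum_add_insert e,
          ← Finset.sum_add_distrib]
        exact Finset.sum_congr rfl fun B _ => by abel
    _ = ∑ A ∈ P, ∑ B ∈ P, (G.xiTerm x y z A B +
          (y * (G.contractEdge e).xiTerm x y z (G.contractEdgeSet e A) (G.contractEdgeSet e B) +
          z * if (∀ f ∈ A, G.EndsDisjoint f e) ∧ ∀ g ∈ B, G.EndsDisjoint g e then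
            (G.extractEdge e).xiTerm x y z (G.extractEdgeSet e A) (G.extractEdgeSet e B)
          else 0)) := by
        refine Finset.sum_congr rfl fun A hA => Finset.sum_congr rfl fun B hB => ?_
        rw [xiTerm_insert_add x y z (notMem_of_mem_powerset_filter_ne hA)
          (notMem_of_mem_powerset_filter_ne hB), mul_ite, mul_zero]
    _ = _ := by
        simp only [Finset.sum_add_distrib, ← Finset.mul_sum, P, sum_xiTerm_eq_xi_deleteEdge,
          sum_xiTerm_contractEdge_eq_xi, sum_xiTerm_extractEdge_eq_xi, add_assoc]

section Uniqueness

variable {x y z}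

structure XiAxioms (f : Multigraph → R) (x y z : R) : Prop where
  invariant : Invariant f
  map_emptyGraph : f emptyGraph = 1
  map_singleVertex : f singleVertex = x
  map_disjUnion : ∀ G₁ G₂ : Multigraph, f (G₁.disjUnion G₂) = f G₁ * f G₂
  recurrence : ∀ (G : Multigraph) (e : G.E),
    f G = f (G.deleteEdge e) + y * f (G.contractEdge e) + z * f (G.extractEdge e)

theorem xiAxioms_xi (x y z : R) : XiAxioms (fun G => G.xi x y z) x y z where
  invariant _ _ := fun ⟨φ⟩ => xi_congr_iso x y z φ
  map_emptyGraph := by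
    have : IsEmpty emptyGraph.E := inferInstanceAs (IsEmpty Empty)
    rw [xi_of_isEmpty]
    exact pow_zero x
  map_singleVertex := by
    have : IsEmpty singleVertex.E := inferInstanceAs (IsEmpty Empty)
    rw [xi_of_isEmpty]
    exact pow_one x
  map_disjUnion := xi_disjUnion x y z
  recurrence := xi_eq_deleteEdge_add x y z

def Iso.ofIsEmpty {G H : Multigraph} [IsEmpty G.E] [IsEmpty H.E] (φ : G.V ≃ H.V) : G.Iso H where
  vEquiv := φ
  eEquiv := Equiv.equivOfIsEmpty _ _
  ends_map e := isEmptyElim e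

theorem XiAxioms.apply_of_isEmpty {f : Multigraph → R} (hf : XiAxioms f x y z) (G : Multigraph)
    [IsEmpty G.E] : f G = x ^ Fintype.card G.V := by
  induction hn : Fintype.card G.V generalizing G with
  | zero =>
    have : IsEmpty G.V := Fintype.card_eq_zero_iff.1 hn
    have : IsEmpty emptyGraph.E := inferInstanceAs (IsEmpty Empty)
    rw [hf.invariant _ emptyGraph ⟨Iso.ofIsEmpty (Equiv.equivOfIsEmpty _ Empty)⟩, hf.map_emptyGraph,
      pow_zero]
  | succ n ih =>
    obtain ⟨v⟩ : Nonempty G.V := Fintype.card_pos_iff.1 (hn ▸ n.succ_pos)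
    let H := singleVertex.disjUnion (G.deleteVertex v)
    have : IsEmpty H.E := inferInstanceAs (IsEmpty (Empty ⊕ {e : G.E // v ∉ G.ends e}))
    have : IsEmpty (G.deleteVertex v).E := inferInstanceAs (IsEmpty {e : G.E // v ∉ G.ends e})
    let φ : G.V ≃ H.V := (Equiv.optionSubtypeNe v).symm.trans
      ((Equiv.optionEquivSumPUnit _).trans (Equiv.sumComm _ _))
    have hcard : Fintype.card (G.deleteVertex v).V = n := by
      have := Fintype.card_congr φ
      simp only [H, disjUnion, singleVertex, Fintype.card_sum, Fintype.card_unit] at this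
      omega
    rw [hf.invariant G H ⟨Iso.ofIsEmpty φ⟩, hf.map_disjUnion, hf.map_singleVertex,
      ih _ hcard, pow_succ, mul_comm]

theorem XiAxioms.unique {f g : Multigraph → R} (hf : XiAxioms f x y z) (hg : XiAxioms g x y z)
    (G : Multigraph) : f G = g G := by
  rcases isEmpty_or_nonempty G.E with hE | hE
  · rw [hf.apply_of_isEmpty, hg.apply_of_isEmpty]
  · obtain ⟨e⟩ := hE
    rw [hf.recurrence G e, hg.recurrence G e, hf.unique hg (G.deleteEdge e),
      hf.unique hg (G.contractEdge e), hf.unique hg (G.extractEdge e)]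
termination_by Fintype.card G.E
decreasing_by
  all_goals first
    | exact Fintype.card_subtype_lt (x := e) fun h => h rfl
    | exact Fintype.card_subtype_lt (x := e) fun h => h _ (Sym2.out_fst_mem _) (Sym2.out_fst_mem _)

end Uniqueness

end Multigraph

open MvPolynomial Multigraph in
/-- `ξ` is the unique isomorphism-invariant function from finite
multigraphs to `ℤ[x,y,z]` with `f(∅) = 1`, `f(E₁) = x`, multiplicative over disjoint
unions, and satisfying `f(G) = f(G₋ₑ) + y·f(G/e) + z·f(G†e)` for every edge `e`. -/
theorem xi_unique_characterization :
    (Multigraph.Invariant (fun G => G.xi (X 0 : MvPolynomial (Fin 3) ℤ) (X 1) (X 2))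
      ∧ Multigraph.emptyGraph.xi (X 0 : MvPolynomial (Fin 3) ℤ) (X 1) (X 2) = 1
      ∧ Multigraph.singleVertex.xi (X 0 : MvPolynomial (Fin 3) ℤ) (X 1) (X 2) = X 0
      ∧ (∀ G₁ G₂ : Multigraph, (G₁.disjUnion G₂).xi (X 0 : MvPolynomial (Fin 3) ℤ) (X 1) (X 2) =
          G₁.xi (X 0) (X 1) (X 2) * G₂.xi (X 0) (X 1) (X 2))
      ∧ (∀ (G : Multigraph) (e : G.E),
          G.xi (X 0 : MvPolynomial (Fin 3) ℤ) (X 1) (X 2) =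
            (G.deleteEdge e).xi (X 0) (X 1) (X 2)
              + X 1 * (G.contractEdge e).xi (X 0) (X 1) (X 2)
              + X 2 * (G.extractEdge e).xi (X 0) (X 1) (X 2)))
    ∧ (∀ f : Multigraph → MvPolynomial (Fin 3) ℤ,
        Multigraph.Invariant f →
        f Multigraph.emptyGraph = 1 →
        f Multigraph.singleVertex = X 0 →
        (∀ G₁ G₂ : Multigraph, f (G₁.disjUnion G₂) = f G₁ * f G₂) →
        (∀ (G : Multigraph) (e : G.E),
          f G = f (G.deleteEdge e) + X 1 * f (G.contractEdge e)
            + X 2 * f (G.extractEdge e)) →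
        f = fun G => G.xi (X 0) (X 1) (X 2)) := by
  have hxi := xiAxioms_xi (X 0 : MvPolynomial (Fin 3) ℤ) (X 1) (X 2)
  refine ⟨⟨hxi.invariant, hxi.map_emptyGraph, hxi.map_singleVertex, hxi.map_disjUnion,
    hxi.recurrence⟩, fun f hinv hempty hsingle hmul hrec => ?_⟩
  exact funext (XiAxioms.unique ⟨hinv, hempty, hsingle, hmul, hrec⟩ hxi)
end

section
/- Let G = (V, E) be a finite multigraph, let x ≥ y ≥ 0 be integers, and let e ∈ E be any edge. Then the bivariate chromatic polynomial satisfies P(G, x, y) = P(G_{−e}, x, y) − P(G_{/e}, x, y) + (x − y)·P(G_{†e}, x, y). Moreover, P(G₁ ⊕ G₂, x, y) = P(G₁, x, y)·P(G₂, x, y), P(E₁, x, y) = x, and P(∅, x, y) = 1. -/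
/-- `φ : V → Fin x` is a generalized proper coloring with the first `y` colors proper:
for every edge with endpoints `u, v` it is not the case that both endpoints get proper
colors and the same color.  (For a loop this forces its vertex to get a non-proper
color, and multiple edges impose no extra condition.) -/
def Multigraph.IsDPTColoring (G : Multigraph) {x : ℕ} (y : ℕ) (φ : G.V → Fin x) : Prop :=
  ∀ (e : G.E) (u v : G.V), G.ends e = s(u, v) →
    ¬ ((φ u).val < y ∧ (φ v).val < y ∧ φ u = φ v)

/-- The bivariate (Dohmen–Pönitz–Tittmann) chromatic polynomial: the number of
generalized proper colorings with `x` colors, `y` of them proper. -/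
noncomputable def Multigraph.chromP (G : Multigraph) (x y : ℕ) : ℕ :=
  Nat.card {φ : G.V → Fin x // G.IsDPTColoring y φ}

lemma Nat.card_subtype_and_add_card_subtype_and_not {α : Type*} [Finite α] (P Q : α → Prop) :
    Nat.card {a // P a ∧ Q a} + Nat.card {a // P a ∧ ¬ Q a} = Nat.card {a // P a} := by
  classical
  rw [← Nat.card_sum]
  exact Nat.card_congr <|
    (Equiv.sumCongr (Equiv.subtypeSubtypeEquivSubtypeInter P Q).symm
      (Equiv.subtypeSubtypeEquivSubtypeInter P (¬ Q ·)).symm).trans (Equiv.sumCompl _)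

lemma Nat.card_subtype_comp_of_surjective {α β γ : Type*} {f : α → β}
    (hf : Function.Surjective f) {R : (α → γ) → Prop} (hR : ∀ φ, R φ → ∃ ψ, ψ ∘ f = φ) :
    Nat.card {ψ : β → γ // R (ψ ∘ f)} = Nat.card {φ // R φ} :=
  Nat.card_congr <| Equiv.ofBijective (fun ψ => ⟨ψ.1 ∘ f, ψ.2⟩)
    ⟨fun _ _ h => Subtype.ext (hf.injective_comp_right (congrArg Subtype.val h)),
      fun φ => let ⟨ψ, hψ⟩ := hR φ φ.2; ⟨⟨ψ, hψ ▸ φ.2⟩, Subtype.ext hψ⟩⟩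

lemma Fin.card_subtype_not_val_lt (x y : ℕ) : Nat.card {c : Fin x // ¬ c.val < y} = x - y := by
  rw [Nat.card_eq_fintype_card, Fintype.card_subtype_compl, Fintype.card_fin,
    Fintype.card_subtype, Fin.card_filter_val_lt]
  omega

namespace Multigraph

section Monochromatic

variable {V W : Type} {x : ℕ} (y : ℕ)

def IsProperMono (φ : V → Fin x) (s : Sym2 V) : Prop :=
  ∃ c : Fin x, c.val < y ∧ ∀ v ∈ s, φ v = c

variable {y}

lemma isProperMono_mk {φ : V → Fin x} {a b : V} :
    IsProperMono y φ s(a, b) ↔ (φ a).val < y ∧ (φ b).val < y ∧ φ a = φ b := by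
  simp only [IsProperMono, Sym2.forall_mem_pair]
  constructor
  · rintro ⟨c, hc, ha, hb⟩
    exact ⟨ha ▸ hc, hb ▸ hc, ha.trans hb.symm⟩
  · rintro ⟨ha, -, hab⟩
    exact ⟨φ a, ha, rfl, hab.symm⟩

lemma isProperMono_map {φ : W → Fin x} {f : V → W} {s : Sym2 V} :
    IsProperMono y φ (s.map f) ↔ IsProperMono y (φ ∘ f) s := by
  simp [IsProperMono, Sym2.mem_map]

lemma isProperMono_attachWith {p : V → Prop} {φ : V → Fin x} {s : Sym2 V}
    (h : ∀ v ∈ s, p v) :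
    IsProperMono y (fun w : {v // p v} => φ w) (s.attachWith h) ↔ IsProperMono y φ s := by
  conv_rhs => rw [← Sym2.attachWith_map_subtypeVal h]
  exact isProperMono_map.symm

lemma not_isProperMono_of_mem {φ : V → Fin x} {s : Sym2 V} {v : V} (hv : v ∈ s)
    (hφv : ¬ (φ v).val < y) : ¬ IsProperMono y φ s := by
  rintro ⟨c, hc, hs⟩
  exact hφv (hs v hv ▸ hc)

end Monochromatic

variable {x y : ℕ}

lemma isDPTColoring_iff {G : Multigraph} {φ : G.V → Fin x} :
    G.IsDPTColoring y φ ↔ ∀ e, ¬ IsProperMono y φ (G.ends e) := by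
  refine forall_congr' fun e => ?_
  induction G.ends e using Sym2.ind with
  | _ a b =>
    constructor
    · exact fun h hmono => h a b rfl (isProperMono_mk.1 hmono)
    · intro h u v huv
      rwa [huv, isProperMono_mk] at h

lemma isDPTColoring_iff_deleteEdge {G : Multigraph} {φ : G.V → Fin x} (e : G.E) :
    G.IsDPTColoring y φ ↔
      (G.deleteEdge e).IsDPTColoring y φ ∧ ¬ IsProperMono y φ (G.ends e) := by
  rw [isDPTColoring_iff]
  refine ⟨fun h => ⟨isDPTColoring_iff.2 fun e' => h e'.val, h e⟩, fun ⟨hdel, he⟩ e' => ?_⟩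
  by_cases he' : e' = e
  · exact he' ▸ he
  · exact isDPTColoring_iff.1 hdel ⟨e', he'⟩

noncomputable def numMonoEdgeColorings (G : Multigraph) (x y : ℕ) (e : G.E) : ℕ :=
  Nat.card {φ : G.V → Fin x // (G.deleteEdge e).IsDPTColoring y φ ∧ IsProperMono y φ (G.ends e)}

lemma chromP_deleteEdge (G : Multigraph) (x y : ℕ) (e : G.E) :
    (G.deleteEdge e).chromP x y = G.numMonoEdgeColorings x y e + G.chromP x y := by
  have hG : G.chromP x y = Nat.card {φ : G.V → Fin x //
      (G.deleteEdge e).IsDPTColoring y φ ∧ ¬ IsProperMono y φ (G.ends e)} :=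
    Nat.card_congr (Equiv.subtypeEquivRight fun _ => isDPTColoring_iff_deleteEdge e)
  rw [hG, numMonoEdgeColorings]
  exact (Nat.card_subtype_and_add_card_subtype_and_not
    (fun φ : G.V → Fin x => (G.deleteEdge e).IsDPTColoring y φ) _).symm

section Contraction

variable {G : Multigraph} {e : G.E}

/-- The vertex map by which `contractEdge` relabels the ends of the remaining edges. -/
def contractVertex (G : Multigraph) (e : G.E) (v : G.V) : (G.contractEdge e).V :=
  if h : v ∈ G.ends e then Sum.inr () else Sum.inl ⟨v, h⟩

lemma contractVertex_of_mem {v : G.V} (h : v ∈ G.ends e) :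
    G.contractVertex e v = Sum.inr () := dif_pos h

lemma contractVertex_of_not_mem {v : G.V} (h : v ∉ G.ends e) :
    G.contractVertex e v = Sum.inl ⟨v, h⟩ := dif_neg h

lemma exists_mem_ends (e : G.E) : ∃ v, v ∈ G.ends e :=
  ⟨_, Sym2.out_fst_mem (G.ends e)⟩

lemma contractVertex_surjective : Function.Surjective (G.contractVertex e) := by
  rintro (w | ⟨⟩)
  · exact ⟨w.val, contractVertex_of_not_mem w.2⟩
  · obtain ⟨u, hu⟩ := exists_mem_ends e
    exact ⟨u, contractVertex_of_mem hu⟩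

lemma isDPTColoring_contractEdge_iff {ψ : (G.contractEdge e).V → Fin x} :
    (G.contractEdge e).IsDPTColoring y ψ ↔
      (G.deleteEdge e).IsDPTColoring y (ψ ∘ G.contractVertex e) := by
  rw [isDPTColoring_iff, isDPTColoring_iff (G := G.deleteEdge e)]
  exact forall_congr' fun e' => not_congr isProperMono_map

lemma isProperMono_comp_contractVertex_iff {ψ : (G.contractEdge e).V → Fin x} :
    IsProperMono y (ψ ∘ G.contractVertex e) (G.ends e) ↔ (ψ (Sum.inr ())).val < y := by
  constructor
  · rintro ⟨c, hc, hψ⟩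
    obtain ⟨u, hu⟩ := exists_mem_ends e
    have := hψ u hu
    rw [Function.comp_apply, contractVertex_of_mem hu] at this
    exact this ▸ hc
  · exact fun h => ⟨_, h, fun v hv => by rw [Function.comp_apply, contractVertex_of_mem hv]⟩

lemma exists_comp_contractVertex_eq {φ : G.V → Fin x} (h : IsProperMono y φ (G.ends e)) :
    ∃ ψ, ψ ∘ G.contractVertex e = φ := by
  obtain ⟨c, -, hc⟩ := h
  refine ⟨Sum.elim (fun w => φ w.val) (fun _ => c), funext fun v => ?_⟩
  by_cases hv : v ∈ G.ends e
  · exact (congrArg (Sum.elim _ _) (contractVertex_of_mem hv)).trans (hc v hv).symm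
  · exact congrArg (Sum.elim _ _) (contractVertex_of_not_mem hv)

lemma isDPTColoring_contractEdge_iff_extractEdge {ψ : (G.contractEdge e).V → Fin x}
    (hψ : ¬ (ψ (Sum.inr ())).val < y) :
    (G.contractEdge e).IsDPTColoring y ψ ↔ (G.extractEdge e).IsDPTColoring y (ψ ∘ Sum.inl) := by
  have touching (e' : G.E) (h : ∃ v ∈ G.ends e', v ∈ G.ends e) :
      ¬ IsProperMono y (ψ ∘ G.contractVertex e) (G.ends e') := by
    obtain ⟨v, hv', hv⟩ := h
    exact not_isProperMono_of_mem hv' (by rwa [Function.comp_apply, contractVertex_of_mem hv])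
  have restrict (e' : (G.extractEdge e).E) :
      IsProperMono y (ψ ∘ Sum.inl) ((G.extractEdge e).ends e') ↔
        IsProperMono y (ψ ∘ G.contractVertex e) (G.ends e'.val) := by
    have : ψ ∘ Sum.inl = fun w : {v // v ∉ G.ends e} => (ψ ∘ G.contractVertex e) w :=
      funext fun w => congrArg ψ (contractVertex_of_not_mem w.2).symm
    rw [this]
    exact isProperMono_attachWith _
  rw [isDPTColoring_contractEdge_iff, isDPTColoring_iff (G := G.deleteEdge e), isDPTColoring_iff]
  refine ⟨fun h e' hmono => h ⟨e'.val, fun he => ?_⟩ ((restrict e').1 hmono), fun h e' => ?_⟩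
  · obtain ⟨u, hu⟩ := exists_mem_ends e
    exact e'.2 u (by rwa [he]) hu
  · by_cases hnear : ∃ v ∈ G.ends e'.val, v ∈ G.ends e
    · exact touching e'.val hnear
    · have hfar : ∀ v ∈ G.ends e'.val, v ∉ G.ends e := fun v hv hv' => hnear ⟨v, hv, hv'⟩
      exact fun hmono => h ⟨e'.val, hfar⟩ ((restrict ⟨e'.val, hfar⟩).2 hmono)

lemma card_contractEdge_proper :
    Nat.card {ψ : (G.contractEdge e).V → Fin x //
      (G.contractEdge e).IsDPTColoring y ψ ∧ (ψ (Sum.inr ())).val < y} =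
    G.numMonoEdgeColorings x y e := by
  rw [numMonoEdgeColorings, ← Nat.card_subtype_comp_of_surjective
    (R := fun φ : G.V → Fin x => (G.deleteEdge e).IsDPTColoring y φ ∧ IsProperMono y φ (G.ends e))
    contractVertex_surjective (fun φ h => exists_comp_contractVertex_eq h.2)]
  exact Nat.card_congr (Equiv.subtypeEquivRight fun ψ =>
    and_congr isDPTColoring_contractEdge_iff isProperMono_comp_contractVertex_iff.symm)

lemma card_contractEdge_improper :
    Nat.card {ψ : (G.contractEdge e).V → Fin x //
      (G.contractEdge e).IsDPTColoring y ψ ∧ ¬ (ψ (Sum.inr ())).val < y} =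
    (x - y) * (G.extractEdge e).chromP x y := by
  let split : ((G.contractEdge e).V → Fin x) ≃ ((G.extractEdge e).V → Fin x) × Fin x :=
    (Equiv.sumArrowEquivProdArrow _ _ _).trans
      (Equiv.prodCongr (Equiv.refl _) (Equiv.funUnique _ _))
  calc _ = Nat.card ({χ // (G.extractEdge e).IsDPTColoring y χ} × {c : Fin x // ¬ c.val < y}) :=
        Nat.card_congr <| (Equiv.subtypeEquiv split fun ψ =>
          and_congr_left isDPTColoring_contractEdge_iff_extractEdge).trans
            Equiv.subtypeProdEquivProd
    _ = _ := by rw [Nat.card_prod, Fin.card_subtype_not_val_lt, mul_comm]; rfl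

end Contraction

lemma chromP_contractEdge (G : Multigraph) (x y : ℕ) (e : G.E) :
    (G.contractEdge e).chromP x y =
      G.numMonoEdgeColorings x y e + (x - y) * (G.extractEdge e).chromP x y := by
  rw [chromP, ← Nat.card_subtype_and_add_card_subtype_and_not _
    (fun ψ : (G.contractEdge e).V → Fin x => (ψ (Sum.inr ())).val < y),
    card_contractEdge_proper, card_contractEdge_improper]

lemma isDPTColoring_disjUnion_iff {G₁ G₂ : Multigraph} {φ : (G₁.disjUnion G₂).V → Fin x} :
    (G₁.disjUnion G₂).IsDPTColoring y φ ↔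
      G₁.IsDPTColoring y (φ ∘ Sum.inl) ∧ G₂.IsDPTColoring y (φ ∘ Sum.inr) := by
  rw [isDPTColoring_iff, isDPTColoring_iff, isDPTColoring_iff]
  exact Sum.forall.trans <| and_congr (forall_congr' fun _ => not_congr isProperMono_map)
    (forall_congr' fun _ => not_congr isProperMono_map)

lemma chromP_disjUnion (x y : ℕ) (G₁ G₂ : Multigraph) :
    (G₁.disjUnion G₂).chromP x y = G₁.chromP x y * G₂.chromP x y := by
  rw [chromP, chromP, chromP, ← Nat.card_prod]
  exact Nat.card_congr <| (Equiv.subtypeEquiv (Equiv.sumArrowEquivProdArrow _ _ _)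
    fun _ => isDPTColoring_disjUnion_iff).trans Equiv.subtypeProdEquivProd

lemma chromP_singleVertex (x y : ℕ) : singleVertex.chromP x y = x := by
  refine (Nat.card_congr ?_).trans (Nat.card_fin x)
  exact (Equiv.subtypeUnivEquiv fun _ e => e.elim).trans (Equiv.funUnique Unit (Fin x))

lemma chromP_emptyGraph (x y : ℕ) : emptyGraph.chromP x y = 1 := by
  rw [chromP, Nat.card_eq_one_iff_unique]
  exact ⟨⟨fun _ _ => Subtype.ext (funext fun v => v.elim)⟩,
    ⟨⟨fun v => v.elim, fun e => e.elim⟩⟩⟩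

end Multigraph

open Multigraph in
/-- For integers `x ≥ y ≥ 0` the bivariate chromatic polynomial
satisfies `P(G) = P(G₋ₑ) − P(G/e) + (x−y)·P(G†e)`, is multiplicative over disjoint
union, and `P(E₁) = x`, `P(∅) = 1`. -/
theorem chromP_edge_elimination (G : Multigraph) (x y : ℕ) (hxy : y ≤ x) (e : G.E) :
    ((G.chromP x y : ℤ) = (G.deleteEdge e).chromP x y - (G.contractEdge e).chromP x y
        + ((x : ℤ) - (y : ℤ)) * (G.extractEdge e).chromP x y)
    ∧ (∀ G₁ G₂ : Multigraph, (G₁.disjUnion G₂).chromP x y = G₁.chromP x y * G₂.chromP x y)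
    ∧ Multigraph.singleVertex.chromP x y = x
    ∧ Multigraph.emptyGraph.chromP x y = 1 := by
  refine ⟨?_, chromP_disjUnion x y, chromP_singleVertex x y, chromP_emptyGraph x y⟩
  have hdelete := congrArg (Nat.cast (R := ℤ)) (chromP_deleteEdge G x y e)
  have hcontract := congrArg (Nat.cast (R := ℤ)) (chromP_contractEdge G x y e)
  push_cast [Nat.cast_sub hxy] at hdelete hcontract
  linarith
end
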